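/- Let d ≥ 2, m ≥ 1 and let ω = (ω_n)_{n≥0} be a sequence of surjective group homomorphisms ω_n : (ZMod d)^m → ZMod d. For every n ≥ 1, the level-n Schreier graph Γ_n is connected and its diameter equals 2^n − 1. -/
import Mathlib


open MeasureTheory

noncomputable section

/-- The boundary of the `d`-regular rooted tree: infinite words over `X = {0,…,d-1}`,
identified with `ZMod d`. -/
abbrev Bd (d : ℕ) : Type := ℕ → ZMod d
/-- The rooted automorphism `a`: adds 1 (mod `d`) to the first letter. -/
def aMap (d : ℕ) (ξ : Bd d) : Bd d := fun n => if n = 0 then ξ 0 + 1 else ξ n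

open scoped Classical in
/-- The spinal automorphism `b_ω`: if `ξ` starts with `(d-1)^r 0`, add `ω r b` to the
letter at position `r + 1`; otherwise fix `ξ`. -/
def bMap (d m : ℕ) (ω : ℕ → ((Fin m → ZMod d) →+ ZMod d)) (b : Fin m → ZMod d)
    (ξ : Bd d) : Bd d := fun n =>
  if n ≠ 0 ∧ (∀ i, i < n - 1 → ξ i = (d : ZMod d) - 1) ∧ ξ (n - 1) = 0 then
    ξ n + ω (n - 1) b
  else ξ n
/-- The spinal generating set `S = {a^j : 1 ≤ j ≤ d-1} ∪ {b_ω : b ∈ B ∖ {0}}`,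
as a set of self-maps of the boundary. -/
def genSet (d m : ℕ) (ω : ℕ → ((Fin m → ZMod d) →+ ZMod d)) : Set (Bd d → Bd d) :=
  {f | ∃ j, 1 ≤ j ∧ j ≤ d - 1 ∧ f = (aMap d)^[j]} ∪ {f | ∃ b, b ≠ 0 ∧ f = bMap d m ω b}

/-- Extension of a finite word to an infinite word (by zeros).  The action of every
generator on the first `n` letters only depends on the first `n` letters, so this
realizes the level-`n` action. -/
def extWord {d n : ℕ} (u : Fin n → ZMod d) : Bd d :=
  fun k => if h : k < n then u ⟨k, h⟩ else 0

/-- The level-`n` Schreier graph `Γ_n`: the simple graph on words of length `n` in which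
distinct `u, v` are adjacent iff `s · u = v` for some `s ∈ S`. -/
def levelGraph (d m n : ℕ) (ω : ℕ → ((Fin m → ZMod d) →+ ZMod d)) :
    SimpleGraph (Fin n → ZMod d) :=
  SimpleGraph.fromRel
    (fun u v => ∃ f ∈ genSet d m ω, ∀ i : Fin n, f (extWord u) (i : ℕ) = v i)

section AuxLemmas

variable {d m : ℕ}

/-- `d - 1` is nonzero in `ZMod d` when `d ≥ 2`. -/
lemma T_ne_zero (hd : 2 ≤ d) : ((d : ZMod d) - 1) ≠ 0 := by
  haveI : Fact (1 < d) := ⟨by omega⟩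
  rw [ZMod.natCast_self, zero_sub, neg_ne_zero]
  exact one_ne_zero

lemma extWord_apply {n : ℕ} (u : Fin n → ZMod d) (i : Fin n) :
    extWord u (i : ℕ) = u i := by
  simp [extWord]

lemma extWord_apply_of_lt {n : ℕ} (u : Fin n → ZMod d) {k : ℕ} (h : k < n) :
    extWord u k = u ⟨k, h⟩ := dif_pos h

/-- Abstract description of the edges of the level-`n` Schreier graph. -/
def EdgeRel (d : ℕ) {n : ℕ} (u v : Fin n → ZMod d) : Prop :=
  u ≠ v ∧ ((∀ i : Fin n, (i : ℕ) ≠ 0 → u i = v i) ∨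
    ∃ r : ℕ, r + 1 < n ∧ (∀ i : Fin n, (i : ℕ) < r → u i = (d : ZMod d) - 1) ∧
      (∀ i : Fin n, (i : ℕ) = r → u i = 0) ∧ ∀ i : Fin n, (i : ℕ) ≠ r + 1 → u i = v i)

lemma EdgeRel.symm' {n : ℕ} {u v : Fin n → ZMod d} (h : EdgeRel d u v) : EdgeRel d v u := by
  obtain ⟨hne, h1 | ⟨r, hr, hpre, hr0, hoff⟩⟩ := h
  · exact ⟨hne.symm, Or.inl fun i hi => (h1 i hi).symm⟩
  · refine ⟨hne.symm, Or.inr ⟨r, hr, fun i hi => ?_, fun i hi => ?_,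
      fun i hi => (hoff i hi).symm⟩⟩
    · rw [← hoff i (by omega)]; exact hpre i hi
    · rw [← hoff i (by omega)]; exact hr0 i hi

/-- The condition in the definition of `bMap`. -/
abbrev Cnd (d : ℕ) (ξ : Bd d) (k : ℕ) : Prop :=
  k ≠ 0 ∧ (∀ i, i < k - 1 → ξ i = (d : ZMod d) - 1) ∧ ξ (k - 1) = 0

lemma cnd_unique (hd : 2 ≤ d) (ξ : Bd d) {k l : ℕ} (hk : Cnd d ξ k) (hl : Cnd d ξ l) :
    k = l := by
  obtain ⟨hk0, hk1, hk2⟩ := hk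
  obtain ⟨hl0, hl1, hl2⟩ := hl
  rcases Nat.lt_trichotomy k l with h | h | h
  · have h1 := hl1 (k - 1) (by omega)
    rw [hk2] at h1
    exact absurd h1.symm (T_ne_zero hd)
  · exact h
  · have h1 := hk1 (l - 1) (by omega)
    rw [hl2] at h1
    exact absurd h1.symm (T_ne_zero hd)

open scoped Classical in
lemma bMap_apply (ω : ℕ → ((Fin m → ZMod d) →+ ZMod d)) (b : Fin m → ZMod d)
    (ξ : Bd d) (k : ℕ) :
    bMap d m ω b ξ k = if Cnd d ξ k then ξ k + ω (k - 1) b else ξ k := by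
  rfl

lemma aMap_iterate (d j : ℕ) (ξ : Bd d) (k : ℕ) :
    (aMap d)^[j] ξ k = if k = 0 then ξ 0 + (j : ZMod d) else ξ k := by
  induction j generalizing ξ with
  | zero => by_cases h : k = 0 <;> simp [h]
  | succ j ih =>
      rw [Function.iterate_succ_apply, ih]
      by_cases h : k = 0 <;> simp [aMap, h]
      ring

end AuxLemmas

section Adjacency

variable {d m : ℕ} {ω : ℕ → ((Fin m → ZMod d) →+ ZMod d)}

lemma gen_to_edgeRel (hd : 2 ≤ d) {n : ℕ} {u v : Fin n → ZMod d}
    (hne : u ≠ v) (hf : ∃ f ∈ genSet d m ω, ∀ i : Fin n, f (extWord u) (i : ℕ) = v i) :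
    EdgeRel d u v := by
  obtain ⟨f, hmem, hfv⟩ := hf
  rcases hmem with ⟨j, hj1, hj2, rfl⟩ | ⟨b, hb, rfl⟩
  · refine ⟨hne, Or.inl fun i hi => ?_⟩
    have := hfv i
    rw [aMap_iterate, if_neg hi, extWord_apply] at this
    exact this
  · -- bMap case
    obtain ⟨i0, hi0⟩ : ∃ i : Fin n, u i ≠ v i := by
      by_contra hcon
      push_neg at hcon
      exact hne (funext hcon)
    have hv0 := hfv i0
    rw [bMap_apply] at hv0
    have hC0 : Cnd d (extWord u) (i0 : ℕ) := by
      by_contra hC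
      rw [if_neg hC, extWord_apply] at hv0
      exact hi0 hv0
    rw [if_pos hC0, extWord_apply] at hv0
    have hi0ne : (i0 : ℕ) ≠ 0 := hC0.1
    refine ⟨hne, Or.inr ⟨(i0 : ℕ) - 1, by omega, fun i hi => ?_, fun i hi => ?_,
      fun i hi => ?_⟩⟩
    · have := hC0.2.1 (i : ℕ) hi
      rwa [extWord_apply] at this
    · have := hC0.2.2
      rw [show (i0 : ℕ) - 1 = (i : ℕ) from hi.symm, extWord_apply] at this
      exact this
    · have hv := hfv i
      rw [bMap_apply] at hv
      have hCi : ¬ Cnd d (extWord u) (i : ℕ) := by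
        intro hC
        exact (by omega : (i : ℕ) ≠ (i0 : ℕ)) (cnd_unique hd _ hC hC0)
      rw [if_neg hCi, extWord_apply] at hv
      exact hv

lemma levelGraph_adj_iff (hd : 2 ≤ d)
    (hsurj : ∀ k, Function.Surjective (ω k)) {n : ℕ} (u v : Fin n → ZMod d) :
    (levelGraph d m n ω).Adj u v ↔ EdgeRel d u v := by
  haveI : NeZero d := ⟨by omega⟩
  rw [levelGraph, SimpleGraph.fromRel_adj]
  constructor
  · rintro ⟨hne, h | h⟩
    · exact gen_to_edgeRel hd hne h
    · exact (gen_to_edgeRel hd (Ne.symm hne) h).symm'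
  · rintro ⟨hne, h1 | ⟨r, hr, hpre, hr0, hoff⟩⟩
    · -- a-type edge
      obtain ⟨i0, hi0⟩ : ∃ i : Fin n, u i ≠ v i := by
        by_contra hcon; push_neg at hcon; exact hne (funext hcon)
      have hi00 : (i0 : ℕ) = 0 := by
        by_contra h; exact hi0 (h1 i0 h)
      set c : ZMod d := v i0 - u i0 with hc
      have hcne : c ≠ 0 := sub_ne_zero.mpr (Ne.symm hi0)
      refine ⟨hne, Or.inl ⟨(aMap d)^[c.val], Or.inl ⟨c.val, ?_, ?_, rfl⟩, fun i => ?_⟩⟩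
      · have := (ZMod.val_eq_zero c).not.mpr hcne
        omega
      · have := ZMod.val_lt c
        omega
      · rw [aMap_iterate]
        by_cases h : (i : ℕ) = 0
        · rw [if_pos h]
          have hii0 : i = i0 := Fin.ext (by omega)
          rw [show extWord u 0 = u i0 by rw [← hi00, extWord_apply], hii0,
            ZMod.natCast_val, ZMod.cast_id]
          rw [hc]; ring
        · rw [if_neg h, extWord_apply]
          exact h1 i h
    · -- b-type edge
      have hrn : r + 1 < n := hr
      set i1 : Fin n := ⟨r + 1, hrn⟩ with hi1
      have hne1 : u i1 ≠ v i1 := by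
        intro heq
        apply hne
        funext i
        by_cases h : (i : ℕ) = r + 1
        · rw [show i = i1 from Fin.ext h]; exact heq
        · exact hoff i h
      set c : ZMod d := v i1 - u i1 with hc
      have hcne : c ≠ 0 := sub_ne_zero.mpr (Ne.symm hne1)
      obtain ⟨b, hb⟩ := hsurj r c
      have hbne : b ≠ 0 := by
        intro h; rw [h, map_zero] at hb; exact hcne hb.symm
      have hC1 : Cnd d (extWord u) (r + 1) := by
        refine ⟨by omega, fun i hi => ?_, ?_⟩
        · have hin : i < n := by omega
          rw [extWord_apply_of_lt u hin]
          exact hpre _ (by simpa using hi)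
        · rw [show r + 1 - 1 = r by omega, extWord_apply_of_lt u (by omega : r < n)]
          exact hr0 _ rfl
      refine ⟨hne, Or.inl ⟨bMap d m ω b, Or.inr ⟨b, hbne, rfl⟩, fun i => ?_⟩⟩
      rw [bMap_apply]
      by_cases h : (i : ℕ) = r + 1
      · rw [h, if_pos hC1, show r + 1 - 1 = r by omega, hb, extWord_apply_of_lt u hrn]
        have : i = i1 := Fin.ext h
        rw [this, hc]
        have : u i1 = u ⟨r+1, hrn⟩ := rfl
        rw [← this]; ring
      · have hCi : ¬ Cnd d (extWord u) (i : ℕ) := by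
          intro hC
          exact h (cnd_unique hd _ hC hC1)
        rw [if_neg hCi, extWord_apply]
        exact hoff i h

end Adjacency

section Words

variable {d : ℕ}

/-- The all-`(d-1)` word. -/
def tw (d n : ℕ) : Fin n → ZMod d := fun _ => (d : ZMod d) - 1

/-- The word `(d-1)^(n-1) 0`. -/
def zw (d n : ℕ) : Fin n → ZMod d := fun i => if (i : ℕ) = n - 1 then 0 else (d : ZMod d) - 1

lemma snoc_apply {n : ℕ} (u : Fin n → ZMod d) (x : ZMod d) (i : Fin (n + 1)) :
    (Fin.snoc u x : Fin (n + 1) → ZMod d) i = if h : (i : ℕ) < n then u ⟨i, h⟩ else x := by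
  by_cases h : (i : ℕ) < n
  · rw [dif_pos h]
    have hi : i = Fin.castSucc ⟨i, h⟩ := Fin.ext rfl
    conv_lhs => rw [hi]
    rw [Fin.snoc_castSucc]
  · rw [dif_neg h]
    have hi : i = Fin.last n := Fin.ext (by simp only [Fin.val_last]; omega)
    rw [hi, Fin.snoc_last]

lemma edgeRel_snoc {n : ℕ} (x : ZMod d) {u v : Fin n → ZMod d} (h : EdgeRel d u v) :
    EdgeRel d (Fin.snoc u x : Fin (n + 1) → ZMod d) (Fin.snoc v x) := by
  obtain ⟨hne, hcase⟩ := h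
  have hne' : (Fin.snoc u x : Fin (n + 1) → ZMod d) ≠ Fin.snoc v x := by
    intro heq
    apply hne
    funext i
    have := congrFun heq (Fin.castSucc i)
    rwa [Fin.snoc_castSucc, Fin.snoc_castSucc] at this
  refine ⟨hne', ?_⟩
  rcases hcase with h1 | ⟨r, hr, hpre, hr0, hoff⟩
  · refine Or.inl fun i hi => ?_
    rw [snoc_apply, snoc_apply]
    by_cases h : (i : ℕ) < n
    · rw [dif_pos h, dif_pos h]; exact h1 ⟨i, h⟩ hi
    · rw [dif_neg h, dif_neg h]
  · refine Or.inr ⟨r, by omega, fun i hi => ?_, fun i hi => ?_, fun i hi => ?_⟩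
    · rw [snoc_apply, dif_pos (by omega : (i : ℕ) < n)]
      exact hpre _ hi
    · rw [snoc_apply, dif_pos (by omega : (i : ℕ) < n)]
      exact hr0 _ hi
    · rw [snoc_apply, snoc_apply]
      by_cases h : (i : ℕ) < n
      · rw [dif_pos h, dif_pos h]; exact hoff ⟨i, h⟩ hi
      · rw [dif_neg h, dif_neg h]

lemma edgeRel_clique (hd : 2 ≤ d) {n : ℕ} (hn : 1 ≤ n) {x y : ZMod d} (hxy : x ≠ y) :
    EdgeRel d (Fin.snoc (zw d n) x : Fin (n + 1) → ZMod d) (Fin.snoc (zw d n) y) := by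
  have hne : (Fin.snoc (zw d n) x : Fin (n + 1) → ZMod d) ≠ Fin.snoc (zw d n) y := by
    intro heq
    have := congrFun heq (Fin.last n)
    rw [Fin.snoc_last, Fin.snoc_last] at this
    exact hxy this
  refine ⟨hne, Or.inr ⟨n - 1, by omega, fun i hi => ?_, fun i hi => ?_, fun i hi => ?_⟩⟩
  · rw [snoc_apply, dif_pos (by omega : (i : ℕ) < n)]
    show (if (i : ℕ) = n - 1 then (0 : ZMod d) else (d : ZMod d) - 1) = (d : ZMod d) - 1
    rw [if_neg (by omega)]
  · rw [snoc_apply, dif_pos (by omega : (i : ℕ) < n)]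
    show (if (i : ℕ) = n - 1 then (0 : ZMod d) else (d : ZMod d) - 1) = 0
    rw [if_pos hi]
  · rw [snoc_apply, snoc_apply]
    by_cases h : (i : ℕ) < n
    · rw [dif_pos h, dif_pos h]
    · exact absurd (by omega : (i : ℕ) = n - 1 + 1) hi

end Words

section Walks

variable {d m : ℕ} {ω : ℕ → ((Fin m → ZMod d) →+ ZMod d)}

lemma walk_snoc (hd : 2 ≤ d) (hsurj : ∀ k, Function.Surjective (ω k)) {n : ℕ}
    (x : ZMod d) {u v : Fin n → ZMod d} (w : (levelGraph d m n ω).Walk u v) :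
    ∃ w' : (levelGraph d m (n + 1) ω).Walk (Fin.snoc u x) (Fin.snoc v x),
      w'.length = w.length := by
  induction w with
  | nil => exact ⟨SimpleGraph.Walk.nil, rfl⟩
  | @cons a b c hab w ih =>
      obtain ⟨w', hw'⟩ := ih
      have hadj : (levelGraph d m (n + 1) ω).Adj (Fin.snoc a x) (Fin.snoc b x) := by
        rw [levelGraph_adj_iff hd hsurj]
        exact edgeRel_snoc x ((levelGraph_adj_iff hd hsurj a b).mp hab)
      exact ⟨SimpleGraph.Walk.cons hadj w', by simp [hw']⟩

/-- Main upper-bound construction: any two words at level `n ≥ 1` are joined by a walk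
of length at most `2 ^ n - 1`. -/
lemma exists_short_walk (hd : 2 ≤ d) (hsurj : ∀ k, Function.Surjective (ω k)) :
    ∀ n : ℕ, 1 ≤ n → ∀ u v : Fin n → ZMod d,
      ∃ w : (levelGraph d m n ω).Walk u v, w.length ≤ 2 ^ n - 1 := by
  intro n hn
  induction n, hn using Nat.le_induction with
  | base =>
      intro u v
      by_cases h : u = v
      · subst h; exact ⟨SimpleGraph.Walk.nil, by simp⟩
      · have hadj : (levelGraph d m 1 ω).Adj u v := by
          rw [levelGraph_adj_iff hd hsurj]
          exact ⟨h, Or.inl fun i hi => absurd (by omega : (i : ℕ) = 0) hi⟩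
        exact ⟨hadj.toWalk, by simp⟩
  | succ n hn ih =>
      intro u v
      have hu : Fin.snoc (Fin.init u) (u (Fin.last n)) = u := Fin.snoc_init_self u
      have hv : Fin.snoc (Fin.init v) (v (Fin.last n)) = v := Fin.snoc_init_self v
      by_cases h : u (Fin.last n) = v (Fin.last n)
      · obtain ⟨w0, hw0⟩ := ih (Fin.init u) (Fin.init v)
        obtain ⟨w', hw'⟩ := walk_snoc hd hsurj (u (Fin.last n)) w0
        refine ⟨w'.copy hu (by rw [h, hv]), ?_⟩
        rw [SimpleGraph.Walk.length_copy, hw']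
        have h1 : (1 : ℕ) ≤ 2 ^ n := Nat.one_le_two_pow
        have h2 : 2 ^ n ≤ 2 ^ (n + 1) := Nat.pow_le_pow_right (by norm_num) (by omega)
        omega
      · obtain ⟨w1, hw1⟩ := ih (Fin.init u) (zw d n)
        obtain ⟨w2, hw2⟩ := ih (zw d n) (Fin.init v)
        obtain ⟨w1', hw1'⟩ := walk_snoc hd hsurj (u (Fin.last n)) w1
        obtain ⟨w2', hw2'⟩ := walk_snoc hd hsurj (v (Fin.last n)) w2
        have hadj : (levelGraph d m (n + 1) ω).Adj
            (Fin.snoc (zw d n) (u (Fin.last n))) (Fin.snoc (zw d n) (v (Fin.last n))) := by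
          rw [levelGraph_adj_iff hd hsurj]
          exact edgeRel_clique hd hn h
        refine ⟨(w1'.copy hu rfl).append ((SimpleGraph.Walk.cons hadj w2').copy rfl hv), ?_⟩
        rw [SimpleGraph.Walk.length_append, SimpleGraph.Walk.length_copy,
          SimpleGraph.Walk.length_copy, SimpleGraph.Walk.length_cons, hw1', hw2']
        have h1 : (1 : ℕ) ≤ 2 ^ n := Nat.one_le_two_pow
        have : 2 ^ (n + 1) = 2 ^ n + 2 ^ n := by ring
        omega

end Walks

section Potential

variable {d m : ℕ} {ω : ℕ → ((Fin m → ZMod d) →+ ZMod d)}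

/-- Gray-code style potential: `(gh d n u).1` is the combinatorial distance to `zw d n`,
`(gh d n u).2` the distance to `tw d n`. -/
def gh (d : ℕ) : (n : ℕ) → (Fin n → ZMod d) → ℕ × ℕ
  | 0, _ => (0, 0)
  | n + 1, u =>
      (if u (Fin.last n) = 0 then (gh d n (Fin.init u)).2 else (gh d n (Fin.init u)).1 + 2 ^ n,
       if u (Fin.last n) = (d : ZMod d) - 1 then (gh d n (Fin.init u)).2
       else (gh d n (Fin.init u)).1 + 2 ^ n)

lemma gh_tw (hd : 2 ≤ d) : ∀ n, gh d n (tw d n) = (2 ^ n - 1, 0) := by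
  intro n
  induction n with
  | zero => rfl
  | succ n ih =>
      have hinit : Fin.init (tw d (n + 1)) = tw d n := rfl
      have hlast : tw d (n + 1) (Fin.last n) = (d : ZMod d) - 1 := rfl
      have h1 : (1 : ℕ) ≤ 2 ^ n := Nat.one_le_two_pow
      rw [gh, hinit, hlast, ih, if_neg (T_ne_zero hd), if_pos rfl]
      simp only [Prod.mk.injEq]
      refine ⟨?_, by trivial⟩
      show 2 ^ n - 1 + 2 ^ n = 2 ^ (n + 1) - 1
      omega

lemma gh_zw (hd : 2 ≤ d) (n : ℕ) (hn : 1 ≤ n) : gh d n (zw d n) = (0, 2 ^ n - 1) := by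
  obtain ⟨k, rfl⟩ : ∃ k, n = k + 1 := ⟨n - 1, by omega⟩
  have hinit : Fin.init (zw d (k + 1)) = tw d k := by
    funext i
    show (if (i : ℕ) = k + 1 - 1 then (0 : ZMod d) else (d : ZMod d) - 1) = tw d k i
    rw [if_neg (by omega)]
    rfl
  have hlast : zw d (k + 1) (Fin.last k) = 0 := by
    show (if ((Fin.last k : Fin (k + 1)) : ℕ) = k + 1 - 1 then (0 : ZMod d) else (d : ZMod d) - 1) = 0
    rw [if_pos (by simp only [Fin.val_last]; omega)]
  have h1 : (1 : ℕ) ≤ 2 ^ k := Nat.one_le_two_pow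
  rw [gh, hinit, hlast, gh_tw hd k, if_pos rfl, if_neg (fun h => T_ne_zero hd h.symm)]
  simp only [Prod.mk.injEq]
  refine ⟨by trivial, ?_⟩
  show 2 ^ k - 1 + 2 ^ k = 2 ^ (k + 1) - 1
  omega

lemma snoc_eq_of_init_last {n : ℕ} {u v : Fin (n + 1) → ZMod d}
    (h1 : Fin.init u = Fin.init v) (h2 : u (Fin.last n) = v (Fin.last n)) : u = v := by
  rw [← Fin.snoc_init_self u, ← Fin.snoc_init_self v, h1, h2]

lemma gh_one_le (w : Fin 1 → ZMod d) : (gh d 1 w).1 ≤ 1 ∧ (gh d 1 w).2 ≤ 1 := by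
  constructor
  · show (if w (Fin.last 0) = 0 then (gh d 0 (Fin.init w)).2
        else (gh d 0 (Fin.init w)).1 + 2 ^ 0) ≤ 1
    split <;> simp [gh]
  · show (if w (Fin.last 0) = (d : ZMod d) - 1 then (gh d 0 (Fin.init w)).2
        else (gh d 0 (Fin.init w)).1 + 2 ^ 0) ≤ 1
    split <;> simp [gh]

lemma gh_lip (hd : 2 ≤ d) : ∀ n (u v : Fin n → ZMod d), EdgeRel d u v →
    (gh d n u).1 ≤ (gh d n v).1 + 1 ∧ (gh d n u).2 ≤ (gh d n v).2 + 1 := by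
  intro n
  induction n with
  | zero => intro u v _; simp [gh]
  | succ n ih =>
      intro u v h
      obtain ⟨hne, hcase⟩ := h
      rcases hcase with h1 | ⟨r, hr, hpre, hr0, hoff⟩
      · -- a-type edge: only position 0 changes
        by_cases hn0 : n = 0
        · subst hn0
          refine ⟨le_trans (gh_one_le u).1 (by omega), le_trans (gh_one_le u).2 (by omega)⟩
        · have hlast : u (Fin.last n) = v (Fin.last n) := h1 (Fin.last n) (by simp [hn0])
          have hinitne : Fin.init u ≠ Fin.init v := fun heq => hne (snoc_eq_of_init_last heq hlast)
          have hE : EdgeRel d (Fin.init u) (Fin.init v) := by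
            refine ⟨hinitne, Or.inl fun i hi => ?_⟩
            exact h1 (Fin.castSucc i) (by simpa using hi)
          obtain ⟨hg, hh⟩ := ih _ _ hE
          rw [gh, gh, hlast]
          constructor <;> (split_ifs <;> omega)
      · by_cases hrn : r + 1 < n
        · -- changed position is inside the initial segment
          have hlast : u (Fin.last n) = v (Fin.last n) :=
            hoff (Fin.last n) (by simp only [Fin.val_last]; omega)
          have hinitne : Fin.init u ≠ Fin.init v := fun heq => hne (snoc_eq_of_init_last heq hlast)
          have hE : EdgeRel d (Fin.init u) (Fin.init v) := by
            refine ⟨hinitne, Or.inr ⟨r, hrn, fun i hi => ?_, fun i hi => ?_, fun i hi => ?_⟩⟩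
            · exact hpre (Fin.castSucc i) (by simpa using hi)
            · exact hr0 (Fin.castSucc i) (by simpa using hi)
            · exact hoff (Fin.castSucc i) (by simpa using hi)
          obtain ⟨hg, hh⟩ := ih _ _ hE
          rw [gh, gh, hlast]
          constructor <;> (split_ifs <;> omega)
        · -- changed position is the last letter; initial segment is `zw d n`
          have hrn' : r + 1 = n := by omega
          have hn1 : 1 ≤ n := by omega
          have hinit_eq : Fin.init u = Fin.init v := by
            funext j
            exact hoff (Fin.castSucc j) (by simp only [Fin.coe_castSucc]; omega)
          have hinit_zw : Fin.init u = zw d n := by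
            funext j
            show u (Fin.castSucc j) =
              (if (j : ℕ) = n - 1 then (0 : ZMod d) else (d : ZMod d) - 1)
            by_cases hj : (j : ℕ) = n - 1
            · rw [if_pos hj]
              exact hr0 (Fin.castSucc j) (by simp only [Fin.coe_castSucc]; omega)
            · rw [if_neg hj]
              exact hpre (Fin.castSucc j) (by simp only [Fin.coe_castSucc]; omega)
          have hinit_zw' : Fin.init v = zw d n := hinit_eq ▸ hinit_zw
          have h1 : (1 : ℕ) ≤ 2 ^ n := Nat.one_le_two_pow
          rw [gh, gh, hinit_zw, hinit_zw', gh_zw hd n hn1]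
          simp only
          constructor <;> (split <;> split <;> omega)

lemma gh_le_walk (hd : 2 ≤ d) (hsurj : ∀ k, Function.Surjective (ω k)) {n : ℕ}
    {u v : Fin n → ZMod d} (w : (levelGraph d m n ω).Walk u v) :
    (gh d n u).1 ≤ (gh d n v).1 + w.length := by
  induction w with
  | nil => simp
  | cons h w ih =>
      have := (gh_lip hd _ _ _ ((levelGraph_adj_iff hd hsurj _ _).mp h)).1
      rw [SimpleGraph.Walk.length_cons]
      omega

end Potential

/-- for every `n ≥ 1` the level-`n` Schreier graph `Γ_n` is connected and
has diameter `2^n - 1`. -/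
theorem levelGraph_connected_and_diam (d m : ℕ) (hd : 2 ≤ d) (hm : 1 ≤ m)
    (ω : ℕ → ((Fin m → ZMod d) →+ ZMod d))
    (hsurj : ∀ k, Function.Surjective (ω k)) (n : ℕ) (hn : 1 ≤ n) :
    (levelGraph d m n ω).Connected ∧ (levelGraph d m n ω).diam = 2 ^ n - 1 := by
  set G := levelGraph d m n ω with hG
  have hP := exists_short_walk (m := m) (ω := ω) hd hsurj n hn
  have hconn : G.Connected := by
    rw [SimpleGraph.connected_iff]
    exact ⟨fun u v => ⟨(hP u v).choose⟩, ⟨fun _ => 0⟩⟩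
  refine ⟨hconn, ?_⟩
  have hub : G.ediam ≤ ((2 ^ n - 1 : ℕ) : ℕ∞) := by
    apply SimpleGraph.ediam_le_of_edist_le
    intro u v
    obtain ⟨w, hw⟩ := hP u v
    exact le_trans w.edist_le (by exact_mod_cast Nat.cast_le.mpr hw)
  have hlb : ((2 ^ n - 1 : ℕ) : ℕ∞) ≤ G.ediam := by
    refine le_trans ?_ (SimpleGraph.edist_le_ediam (u := tw d n) (v := zw d n))
    have hreach : G.Reachable (tw d n) (zw d n) := ⟨(hP (tw d n) (zw d n)).choose⟩
    obtain ⟨p, hp⟩ := hreach.exists_walk_length_eq_edist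
    rw [← hp]
    have hwb := gh_le_walk hd hsurj p
    rw [gh_tw hd n, gh_zw hd n hn] at hwb
    simp only at hwb
    exact Nat.cast_le.mpr (by omega)
  have hediam : G.ediam = ((2 ^ n - 1 : ℕ) : ℕ∞) := le_antisymm hub hlb
  show G.ediam.toNat = 2 ^ n - 1
  rw [hediam]
  exact ENat.toNat_coe _

end
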